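/- arXiv:2012.05708 — 2 statements merged into one kernel-verified Lean document; each statement's English description precedes it below -/
import Mathlib

section
/- If A is a ring in which every ideal generated by countably many elements is finitely generated, then every ideal is finitely generated (i.e., A is Noetherian). -/
namespace Submodule

variable {R M : Type*} [Semiring R] [AddCommMonoid M] [Module R M]

theorem fg_iSup_of_countable_span_fg (h : ∀ S : Set M, S.Countable → (span R S).FG)
    {ι : Type*} [Countable ι] (N : ι → Submodule R M) (hN : ∀ i, (N i).FG) :
    (⨆ i, N i).FG := by
  choose s hs_finite hs_span using fun i => fg_def.mp (hN i)
  have hspan : span R (⋃ i, s i) = ⨆ i, N i := by simp only [span_iUnion, hs_span]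
  exact hspan ▸ h _ (Set.countable_iUnion fun i => (hs_finite i).countable)

end Submodule

open Submodule in
/-- The union of an ascending chain of finitely generated submodules is countably generated, hence
finitely generated, hence already equal to one of its members. -/
theorem isNoetherian_of_countable_span_fg {R M : Type*} [Semiring R] [AddCommMonoid M]
    [Module R M] (h : ∀ S : Set M, S.Countable → (span R S).FG) : IsNoetherian R M := by
  rw [isNoetherian_iff_fg_wellFounded, wellFoundedGT_iff_monotone_chain_condition]
  intro N
  let N' : ℕ →o Submodule R M := (OrderHom.Subtype.val _).comp N
  have hfg : (⨆ i, N' i).FG := fg_iSup_of_countable_span_fg h N' fun i => (N i).2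
  obtain ⟨n, hn⟩ := hfg.stabilizes_of_iSup_eq N' rfl
  refine ⟨n, fun m hnm => le_antisymm (N.monotone hnm) ?_⟩
  exact (le_iSup N' m).trans hn.le

theorem stmt_0 {A : Type*} [CommRing A]
    (h : ∀ S : Set A, S.Countable → (Ideal.span S).FG) :
    IsNoetherianRing A :=
  isNoetherian_of_countable_span_fg h
end

section
/- (Strong Nullstellensatz) Let k be an algebraically closed field and a an ideal of k[X_1,...,X_n]. If a polynomial h vanishes on the zero set of a in k^n, then h^m ∈ a for some m ≥ 1. -/
theorem Ideal.exists_pos_pow_mem_of_mem_radical {R : Type*} [CommSemiring R] {I : Ideal R}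
    {r : R} (hr : r ∈ I.radical) : ∃ m : ℕ, 1 ≤ m ∧ r ^ m ∈ I := by
  obtain ⟨m, hm⟩ := hr
  exact ⟨m + 1, Nat.le_add_left 1 m, I.pow_mem_of_pow_mem hm m.le_succ⟩

theorem stmt_19 {k : Type*} [Field k] [IsAlgClosed k] (n : ℕ)
    (a : Ideal (MvPolynomial (Fin n) k)) (h : MvPolynomial (Fin n) k)
    (hvanish : ∀ P : Fin n → k, (∀ f ∈ a, MvPolynomial.eval P f = 0) →
      MvPolynomial.eval P h = 0) :
    ∃ m : ℕ, 1 ≤ m ∧ h ^ m ∈ a := by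
  have h_mem_vanishing : h ∈ MvPolynomial.vanishingIdeal k (MvPolynomial.zeroLocus k a) :=
    fun P hP => by simpa using hvanish P fun f hf => by simpa using hP f hf
  rw [MvPolynomial.vanishingIdeal_zeroLocus_eq_radical] at h_mem_vanishing
  exact Ideal.exists_pos_pow_mem_of_mem_radical h_mem_vanishing
end
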